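/- For every 1 ≤ ℓ < k ≤ t−1 one has a_k = a_ℓ − [(a₁·a₂⋯a_{ℓ−1})·(a_{k−ℓ}⋯a_{k−2}·a_{k−1})]⁻¹, where the first product runs over a_i for 1 ≤ i ≤ ℓ−1 and the second over a_i for k−ℓ ≤ i ≤ k−1. In particular, a_k = a_{k−1} − [a₁²·a₂²⋯a_{k−2}²·a_{k−1}]⁻¹. -/

import Mathlib

open Polynomial

noncomputable section

abbrev SL2 (F : Type*) [Field F] := Matrix.SpecialLinearGroup (Fin 2) F

abbrev PSL2 (F : Type*) [Field F] := SL2 F ⧸ Subgroup.center (SL2 F)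

/-- image in `PSL₂(F)` of the matrix `[[1, x], [0, 1]]`. -/
def uu {F : Type*} [Field F] (x : F) : PSL2 F :=
  QuotientGroup.mk ⟨!![1, x; 0, 1], by simp [Matrix.det_fin_two_of]⟩

/-- image in `PSL₂(F)` of the matrix `[[y, 0], [0, y⁻¹]]`. -/
def hh {F : Type*} [Field F] (y : F) (hy : y ≠ 0) : PSL2 F :=
  QuotientGroup.mk ⟨!![y, 0; 0, y⁻¹], by simp [Matrix.det_fin_two_of, mul_inv_cancel₀ hy]⟩

/-- image in `PSL₂(F)` of the matrix `[[0, 1], [-1, 0]]`. -/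
def ss {F : Type*} [Field F] : PSL2 F :=
  QuotientGroup.mk ⟨!![0, 1; -1, 0], by simp [Matrix.det_fin_two_of]⟩

/-- the sequence `a_k`: `a₁ = a`, `a_{k+1} = a - a_k⁻¹` (with junk value `a₀ = 0`). -/
def aSeq {F : Type*} [Field F] (a : F) : ℕ → F
  | 0 => 0
  | k + 1 => a - (aSeq a k)⁻¹

/-- the sequence `b_ℓ`: `b₀ = b`, `b_{ℓ+1} = a - b_ℓ⁻¹`. -/
def bSeq {F : Type*} [Field F] (a b : F) : ℕ → F
  | 0 => b
  | k + 1 => a - (bSeq a b k)⁻¹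

/-- `alph a n = α_{n-1}(a)`, the (index-shifted) Dickson polynomial of the second
kind values: `α_{-1} = 0`, `α₀ = 1`, `α_{n+1} = a·α_n - α_{n-1}`. -/
def alph {F : Type*} [Field F] (a : F) : ℕ → F
  | 0 => 0
  | 1 => 1
  | n + 2 => a * alph a (n + 1) - alph a n

/-- `bet a b n = β_{n-1}(a,b)`: `β_{-1} = 1`, `β_n = b·α_n - α_{n-1}` for `n ≥ 0`. -/
def bet {F : Type*} [Field F] (a b : F) : ℕ → F
  | 0 => 1
  | n + 1 => b * alph a (n + 1) - alph a n

/-- `gam a b n = γ_{n-1}(a,b)` where `γ_n = α_n + b·β_n`. -/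
def gam {F : Type*} [Field F] (a b : F) (n : ℕ) : F := alph a n + b * bet a b n


/-!
Writing `α_n` for `alph a n`, one has `aSeq a k = α_{k+1} / α_k` as long as `α_1, …, α_k`
are nonzero, so products of consecutive `a_i` telescope to quotients of `α`'s, and the identity
becomes the Catalan-type relation `α_{l+1} α_{l+m} - α_l α_{l+m+1} = α_m`. The nonvanishing
comes from the Binet formula `α_n (x - y) = x^n - y^n` for `x = -ω`, `y = ω + a`: if `α_n = 0`
then `ω^{2n} = 1`, which is impossible for `1 ≤ n < t` since `ω` has order `q + 1`.
-/

section Alph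

variable {F : Type*} [Field F] (a : F)

lemma alph_add_two (n : ℕ) : alph a (n + 2) = a * alph a (n + 1) - alph a n := rfl

lemma alph_mul_alph_sub_alph_mul_alph (m l : ℕ) :
    alph a (l + 1) * alph a (l + m) - alph a l * alph a (l + m + 1) = alph a m := by
  induction l with
  | zero => simp [alph]
  | succ l ih =>
    rw [show l + 1 + m = l + m + 1 by ring, alph_add_two, alph_add_two]
    linear_combination ih

variable {a} {R : Type*} [CommRing R] [Algebra F R] {x y : R}

lemma algebraMap_alph_mul_sub (hsum : x + y = algebraMap F R a) (hprod : x * y = 1) (n : ℕ) :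
    algebraMap F R (alph a n) * (x - y) = x ^ n - y ^ n := by
  induction n using Nat.twoStepInduction with
  | zero => simp [alph]
  | one => simp [alph]
  | more n ih₀ ih₁ =>
    rw [alph_add_two, map_sub, map_mul, ← hsum]
    linear_combination (x + y) * ih₁ - ih₀ + (x ^ n - y ^ n) * hprod

lemma pow_two_mul_eq_one_of_alph_eq_zero (hsum : x + y = algebraMap F R a) (hprod : x * y = 1)
    {n : ℕ} (h : alph a n = 0) : x ^ (2 * n) = 1 := by
  have hxy : x ^ n = y ^ n := by
    rw [← sub_eq_zero, ← algebraMap_alph_mul_sub hsum hprod, h, map_zero, zero_mul]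
  calc x ^ (2 * n) = x ^ n * y ^ n := by rw [two_mul, pow_add, ← hxy]
    _ = 1 := by rw [← mul_pow, hprod, one_pow]

lemma alph_ne_zero_of_not_orderOf_dvd {ω : R}
    (hω : ω ^ 2 + algebraMap F R a * ω + 1 = 0) {n : ℕ} (hn : ¬ orderOf ω ∣ 2 * n) :
    alph a n ≠ 0 := by
  intro h
  have hpow := pow_two_mul_eq_one_of_alph_eq_zero (x := -ω) (y := ω + algebraMap F R a)
    (by ring) (by linear_combination -hω) h
  rw [(even_two_mul n).neg_pow] at hpow
  exact hn (orderOf_dvd_of_pow_eq_one hpow)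

end Alph

lemma Nat.not_dvd_two_mul_of_lt_div_gcd {N n : ℕ} (hn : 0 < n) (hlt : n < N / Nat.gcd 2 N) :
    ¬ N ∣ 2 * n := by
  intro hdvd
  rcases Nat.even_or_odd N with heven | hodd
  · rw [Nat.gcd_eq_left heven.two_dvd] at hlt
    have := Nat.le_of_dvd (by omega) hdvd
    omega
  · have hcop : Nat.Coprime N 2 := Nat.coprime_two_right.mpr hodd
    rw [Nat.gcd_comm, hcop, Nat.div_one] at hlt
    exact absurd (Nat.le_of_dvd hn (hcop.dvd_of_dvd_mul_left hdvd)) (by omega)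

section ASeq

variable {F : Type*} [Field F] {a : F}

lemma aSeq_eq_alph_div {k : ℕ} (hA : ∀ j ∈ Finset.Icc 1 k, alph a j ≠ 0) (hk : 1 ≤ k) :
    aSeq a k = alph a (k + 1) / alph a k := by
  induction k with
  | zero => omega
  | succ k ih =>
    rcases Nat.eq_zero_or_pos k with rfl | hk
    · simp [aSeq, alph]
    · have hAk : alph a (k + 1) ≠ 0 := hA (k + 1) (by simp)
      rw [aSeq, ih (fun j hj ↦ hA j (Finset.Icc_subset_Icc_right k.le_succ hj)) hk, inv_div,
        alph_add_two, sub_div, mul_div_cancel_right₀ _ hAk]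

lemma prod_aSeq_Icc_one {m : ℕ} (hA : ∀ j ∈ Finset.Icc 1 m, alph a j ≠ 0) :
    ∏ i ∈ Finset.Icc 1 m, aSeq a i = alph a (m + 1) := by
  induction m with
  | zero => simp [alph]
  | succ m ih =>
    have hA' : ∀ j ∈ Finset.Icc 1 m, alph a j ≠ 0 :=
      fun j hj ↦ hA j (Finset.Icc_subset_Icc_right m.le_succ hj)
    rw [Finset.prod_Icc_succ_top (by omega), ih hA', aSeq_eq_alph_div hA (by omega),
      mul_div_cancel₀ _ (hA (m + 1) (by simp))]

lemma prod_aSeq_Ioc {n m : ℕ} (hnm : n < m) (hA : ∀ j ∈ Finset.Icc 1 m, alph a j ≠ 0) :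
    ∏ i ∈ Finset.Ioc n m, aSeq a i = alph a (m + 1) / alph a (n + 1) := by
  have hprefix : ∀ k ≤ m, ∏ i ∈ Finset.Ioc 0 k, aSeq a i = alph a (k + 1) := fun k hk ↦ by
    rw [← Finset.Icc_add_one_left_eq_Ioc, zero_add]
    exact prod_aSeq_Icc_one fun j hj ↦ hA j (Finset.Icc_subset_Icc_right hk hj)
  have hsplit := Finset.prod_Ioc_consecutive (aSeq a) n.zero_le hnm.le
  rw [hprefix n hnm.le, hprefix m le_rfl] at hsplit
  refine eq_div_of_mul_eq (hA (n + 1) (Finset.mem_Icc.mpr ⟨by omega, by omega⟩)) ?_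
  rw [mul_comm, hsplit]

lemma aSeq_eq_sub_inv_prod {l k : ℕ} (hA : ∀ j ∈ Finset.Icc 1 k, alph a j ≠ 0) (hl : 1 ≤ l)
    (hlk : l < k) :
    aSeq a k = aSeq a l -
      ((∏ i ∈ Finset.Icc 1 (l - 1), aSeq a i) * ∏ i ∈ Finset.Icc (k - l) (k - 1), aSeq a i)⁻¹ := by
  have hA_of_le : ∀ {m}, m ≤ k → ∀ j ∈ Finset.Icc 1 m, alph a j ≠ 0 :=
    fun hm j hj ↦ hA j (Finset.Icc_subset_Icc_right hm hj)
  have hinit : ∏ i ∈ Finset.Icc 1 (l - 1), aSeq a i = alph a l := by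
    rw [prod_aSeq_Icc_one (hA_of_le (by omega)), Nat.sub_add_cancel hl]
  have htail : ∏ i ∈ Finset.Icc (k - l) (k - 1), aSeq a i = alph a k / alph a (k - l) := by
    rw [show k - l = k - l - 1 + 1 by omega, Finset.Icc_add_one_left_eq_Ioc,
      prod_aSeq_Ioc (by omega) (hA_of_le (by omega)), Nat.sub_add_cancel (by omega),
      Nat.sub_add_cancel (by omega)]
  have hcatalan := alph_mul_alph_sub_alph_mul_alph a (k - l) l
  rw [Nat.add_sub_cancel' hlk.le] at hcatalan
  have hAl := hA l (Finset.mem_Icc.mpr ⟨by omega, by omega⟩)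
  have hAk := hA k (Finset.mem_Icc.mpr ⟨by omega, by omega⟩)
  have hAkl := hA (k - l) (Finset.mem_Icc.mpr ⟨by omega, by omega⟩)
  rw [hinit, htail, aSeq_eq_alph_div hA (by omega), aSeq_eq_alph_div (hA_of_le hlk.le) hl]
  field_simp
  linear_combination -hcatalan

lemma aSeq_eq_sub_inv_prod_sq {k : ℕ} (hA : ∀ j ∈ Finset.Icc 1 k, alph a j ≠ 0) (hk : 2 ≤ k) :
    aSeq a k = aSeq a (k - 1) -
      ((∏ i ∈ Finset.Icc 1 (k - 2), aSeq a i ^ 2) * aSeq a (k - 1))⁻¹ := by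
  rw [aSeq_eq_sub_inv_prod hA (l := k - 1) (by omega) (by omega),
    show k - (k - 1) = 1 by omega, show k - 1 - 1 = k - 2 by omega,
    show k - 1 = k - 2 + 1 by omega, Finset.prod_Icc_succ_top (by omega), Finset.prod_pow]
  ring

end ASeq

theorem stmt13_general (F : Type*) [Field F] (q : ℕ)
    (a : F)
    (ω : AlgebraicClosure F) (hroot : aeval ω (X ^ 2 + C a * X + 1 : F[X]) = 0)
    (hord : orderOf ω = q + 1) (t : ℕ) (ht : t = (q + 1) / Nat.gcd 2 (q + 1)) :
    (∀ l k : ℕ, 1 ≤ l → l < k → k ≤ t - 1 →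
      aSeq a k = aSeq a l -
        ((∏ i ∈ Finset.Icc 1 (l - 1), aSeq a i) *
          ∏ i ∈ Finset.Icc (k - l) (k - 1), aSeq a i)⁻¹) ∧
    (∀ k : ℕ, 2 ≤ k → k ≤ t - 1 →
      aSeq a k = aSeq a (k - 1) -
        ((∏ i ∈ Finset.Icc 1 (k - 2), (aSeq a i) ^ 2) * aSeq a (k - 1))⁻¹) := by
  have hω : ω ^ 2 + algebraMap F _ a * ω + 1 = 0 := by simpa using hroot
  have hA : ∀ k ≤ t - 1, ∀ j ∈ Finset.Icc 1 k, alph a j ≠ 0 := fun k hk j hj ↦ by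
    rw [Finset.mem_Icc] at hj
    refine alph_ne_zero_of_not_orderOf_dvd hω ?_
    rw [hord]
    exact Nat.not_dvd_two_mul_of_lt_div_gcd (by omega) (by omega)
  exact ⟨fun l k hl hlk hk ↦ aSeq_eq_sub_inv_prod (hA k hk) hl hlk,
    fun k hk₂ hk ↦ aSeq_eq_sub_inv_prod_sq (hA k hk) hk₂⟩

theorem stmt13 (F : Type*) [Field F] [Fintype F] (q : ℕ) (hq : Fintype.card F = q)
    (a : F) (hirr : Irreducible (X ^ 2 + C a * X + 1 : F[X]))
    (ω : AlgebraicClosure F) (hroot : aeval ω (X ^ 2 + C a * X + 1 : F[X]) = 0)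
    (hord : orderOf ω = q + 1) (t : ℕ) (ht : t = (q + 1) / Nat.gcd 2 (q + 1)) :
    (∀ l k : ℕ, 1 ≤ l → l < k → k ≤ t - 1 →
      aSeq a k = aSeq a l -
        ((∏ i ∈ Finset.Icc 1 (l - 1), aSeq a i) *
          ∏ i ∈ Finset.Icc (k - l) (k - 1), aSeq a i)⁻¹) ∧
    (∀ k : ℕ, 2 ≤ k → k ≤ t - 1 →
      aSeq a k = aSeq a (k - 1) -
        ((∏ i ∈ Finset.Icc 1 (k - 2), (aSeq a i) ^ 2) * aSeq a (k - 1))⁻¹) :=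
  stmt13_general F q a ω hroot hord t ht

end
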